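/- Let x ≠ 0 and y ∈ ℝ with c := 2x + y² > 0, and let 0 ≤ ε ≤ t. Then ∫_ε^t e^{−xu} Φ(y√u) du = (y/(x√c)) ( Φ(√(ct)) − Φ(√(cε)) ) − (1/x) ( e^{−xt} Φ(y√t) − e^{−xε} Φ(y√ε) ). -/

import Mathlib

open MeasureTheory intervalIntegral Real ProbabilityTheory Filter Asymptotics

/-- The standard Gaussian measure on ℝ. -/
noncomputable def gaussMeasure : Measure ℝ := gaussianReal 0 1

/-- The standard normal CDF. -/
noncomputable def Phi (x : ℝ) : ℝ :=
  ∫ u in Set.Iic x, Real.exp (-u ^ 2 / 2) / Real.sqrt (2 * Real.pi)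

/-- The standard normal density. -/
noncomputable def gaussPdf (x : ℝ) : ℝ := Real.exp (-x ^ 2 / 2) / Real.sqrt (2 * Real.pi)

/-- Black–Scholes `d₁` with volatility `σ` and drift `m`. -/
noncomputable def d1 (σ m s k t : ℝ) : ℝ :=
  (Real.log (s / k) + (m + σ ^ 2 / 2) * t) / (σ * Real.sqrt t)

/-- Black–Scholes `d₂` with volatility `σ` and drift `m`. -/
noncomputable def d2 (σ m s k t : ℝ) : ℝ := d1 σ m s k t - σ * Real.sqrt t

/-- Black–Scholes call price (undiscounted) with volatility `σ` and drift `m`. -/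
noncomputable def BSC (σ m s k t : ℝ) : ℝ :=
  s * Real.exp (m * t) * Phi (d1 σ m s k t) - k * Phi (d2 σ m s k t)

/-- Black–Scholes put price (undiscounted) with volatility `σ` and drift `m`. -/
noncomputable def BSP (σ m s k t : ℝ) : ℝ :=
  k * Phi (-d2 σ m s k t) - s * Real.exp (m * t) * Phi (-d1 σ m s k t)

/-- The function `Υ₀` from the ATM forward valuation formula. -/
noncomputable def Ups0 (t x y : ℝ) : ℝ :=
  y / (x * Real.sqrt (2 * x + y ^ 2)) * (Phi (Real.sqrt ((2 * x + y ^ 2) * t)) - 1 / 2)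
    - 1 / x * (Real.exp (-x * t) * Phi (y * Real.sqrt t) - 1 / 2)

/-- The second-order approximation `Υ̃` of the generalized `Υ` function. -/
noncomputable def UpsTilde (t x y z : ℝ) : ℝ :=
  Ups0 t x y
    + 2 / Real.sqrt (2 * x + y ^ 2) * (Phi (Real.sqrt ((2 * x + y ^ 2) * t)) - 1 / 2)
      * (z - y / 2 * z ^ 2)

/-- Covariance of two real random variables. -/
noncomputable def cov {Ω : Type*} [MeasurableSpace Ω] (P : Measure Ω) (X Y : Ω → ℝ) : ℝ :=
  (∫ ω, X ω * Y ω ∂P) - (∫ ω, X ω ∂P) * (∫ ω, Y ω ∂P)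

/-- Variance of a real random variable. -/
noncomputable def var {Ω : Type*} [MeasurableSpace Ω] (P : Measure Ω) (X : Ω → ℝ) : ℝ :=
  cov P X X

/-- Correlation of two real random variables. -/
noncomputable def corr {Ω : Type*} [MeasurableSpace Ω] (P : Measure Ω) (X Y : Ω → ℝ) : ℝ :=
  cov P X Y / Real.sqrt (var P X * var P Y)

/-! Differentiate the right-hand side in `t`. With `c = 2x + y²`, the Gaussian density terms coming
from `Φ(√(ct))` and from `Φ(y√t)` cancel, because `e^{-xt} φ(y√t) = φ(√(ct))`; what remains is
`e^{-xt} Φ(y√t)`, so the fundamental theorem of calculus gives the formula. -/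

lemma hasDerivAt_integral_Iic {f : ℝ → ℝ} (hf : Integrable f) (hf_cont : Continuous f) (x : ℝ) :
    HasDerivAt (fun b => ∫ u in Set.Iic b, f u) (f x) x := by
  have hsplit (b : ℝ) : ∫ u in Set.Iic b, f u = (∫ u in Set.Iic 0, f u) + ∫ u in 0..b, f u := by
    rw [← integral_Iic_sub_Iic hf.integrableOn hf.integrableOn, add_sub_cancel]
  exact ((integral_hasDerivAt_right hf.intervalIntegrable (hf_cont.stronglyMeasurableAtFilter _ _)
    hf_cont.continuousAt).const_add _).congr_of_eventuallyEq (.of_forall hsplit)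

lemma integrable_gaussPdf : Integrable gaussPdf := by
  refine ((integrable_exp_neg_mul_sq (b := 1 / 2) (by norm_num)).div_const
    (√(2 * π))).congr (.of_forall fun u => ?_)
  simp only [gaussPdf]
  ring_nf

@[fun_prop]
lemma continuous_gaussPdf : Continuous gaussPdf := by
  unfold gaussPdf
  fun_prop

lemma hasDerivAt_Phi (x : ℝ) : HasDerivAt Phi (gaussPdf x) x :=
  hasDerivAt_integral_Iic integrable_gaussPdf continuous_gaussPdf x

@[fun_prop]
lemma continuous_Phi : Continuous Phi :=
  continuous_iff_continuousAt.2 fun x => (hasDerivAt_Phi x).continuousAt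

lemma hasDerivAt_Phi_mul_sqrt (a : ℝ) {u : ℝ} (hu : 0 < u) :
    HasDerivAt (fun v => Phi (a * √v)) (a * gaussPdf (a * √u) / (2 * √u)) u :=
  ((hasDerivAt_Phi _).comp u ((hasDerivAt_sqrt hu.ne').const_mul a)).congr_deriv (by ring)

lemma exp_neg_mul_mul_gaussPdf_mul_sqrt (x y : ℝ) {u : ℝ} (hc : 0 ≤ 2 * x + y ^ 2) (hu : 0 ≤ u) :
    exp (-x * u) * gaussPdf (y * √u) = gaussPdf (√(2 * x + y ^ 2) * √u) := by
  simp only [gaussPdf, mul_pow, sq_sqrt hc, sq_sqrt hu, ← mul_div_assoc, ← exp_add]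
  congr 2
  ring

noncomputable def expPhiPrimitive (x y u : ℝ) : ℝ :=
  y / (x * √(2 * x + y ^ 2)) * Phi (√(2 * x + y ^ 2) * √u) - 1 / x * (exp (-x * u) * Phi (y * √u))

lemma continuous_expPhiPrimitive (x y : ℝ) : Continuous (expPhiPrimitive x y) := by
  unfold expPhiPrimitive
  fun_prop

lemma hasDerivAt_expPhiPrimitive {x y u : ℝ} (hx : x ≠ 0) (hc : 0 < 2 * x + y ^ 2) (hu : 0 < u) :
    HasDerivAt (expPhiPrimitive x y) (exp (-x * u) * Phi (y * √u)) u := by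
  have hexp : HasDerivAt (fun v => exp (-x * v)) (exp (-x * u) * -x) u := by
    simpa using ((hasDerivAt_id u).const_mul (-x)).exp
  refine (((hasDerivAt_Phi_mul_sqrt _ hu).const_mul (y / (x * √(2 * x + y ^ 2)))).sub
    ((hexp.mul (hasDerivAt_Phi_mul_sqrt y hu)).const_mul (1 / x))).congr_deriv ?_
  rw [← exp_neg_mul_mul_gaussPdf_mul_sqrt x y hc.le hu.le]
  have hsqrt : √(2 * x + y ^ 2) ≠ 0 := (sqrt_pos.2 hc).ne'
  generalize √(2 * x + y ^ 2) = s at hsqrt ⊢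
  field_simp
  ring

/-- `∫_ε^t e^{−xu} Φ(y√u) du` in closed form, for `x ≠ 0` and `c = 2x + y² > 0`. -/
theorem integral_exp_mul_Phi_from_eps (x y ε t : ℝ) (hx : x ≠ 0)
    (hc : 0 < 2 * x + y ^ 2) (hε : 0 ≤ ε) (hεt : ε ≤ t) :
    ∫ u in ε..t, Real.exp (-x * u) * Phi (y * Real.sqrt u)
      = y / (x * Real.sqrt (2 * x + y ^ 2)) *
          (Phi (Real.sqrt ((2 * x + y ^ 2) * t)) - Phi (Real.sqrt ((2 * x + y ^ 2) * ε)))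
        - 1 / x * (Real.exp (-x * t) * Phi (y * Real.sqrt t)
            - Real.exp (-x * ε) * Phi (y * Real.sqrt ε)) := by
  have hcont : Continuous fun u => exp (-x * u) * Phi (y * √u) := by fun_prop
  rw [integral_eq_sub_of_hasDeriv_right_of_le hεt (continuous_expPhiPrimitive x y).continuousOn
    (fun u hu => (hasDerivAt_expPhiPrimitive hx hc (hε.trans_lt hu.1)).hasDerivWithinAt)
    (hcont.intervalIntegrable ε t), expPhiPrimitive, expPhiPrimitive, sqrt_mul hc.le,
    sqrt_mul hc.le]
  ring
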